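/- arXiv:2209.11363 — 2 statements merged into one kernel-verified Lean document; each statement's English description precedes it below -/
import Mathlib

section
/- Let U be a one-sample U-statistic of order m based on n independent random variables: U = (1/n^(m)) Σ g(W_{i₁},…,W_{i_m}), where the sum is over all m-tuples of distinct indices in {1,…,n}, n^(m) = n(n−1)⋯(n−m+1), and a ≤ g ≤ b pointwise. Then for any t > 0 and m ≤ n, Pr(|U − E[U]| > t) ≤ 2 exp(−2⌊n/m⌋t²/(b−a)²). -/
open MeasureTheory ProbabilityTheory Finset

/-!
Hoeffding's averaging argument. Cut `k = ⌊n/m⌋` disjoint blocks of `m` indices out of `1, …, n`;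
for a permutation `σ` of the indices, the mean `V_σ` of `g` over the `k` blocks relabelled by `σ`
is an average of `k` independent variables with values in `[a, b]`, so by Hoeffding's lemma
`V_σ - 𝔼 V_σ` is sub-Gaussian with variance proxy `(b - a)² / (4k)`. Since permutations act
transitively on injective `m`-tuples, averaging `V_σ` over all `σ` gives back `U`. Jensen's
bound `exp (t ∑ wᵢ Xᵢ) ≤ ∑ wᵢ exp (t Xᵢ)` needs no independence between the `V_σ`, so `U - 𝔼 U`
is sub-Gaussian with the same proxy, and the Chernoff bound on both tails gives the result.
-/

theorem MulAction.card_nsmul_sum_smul {G X M : Type*} [Group G] [Fintype G] [MulAction G X]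
    [Fintype X] [IsPretransitive G X] [AddCommMonoid M] (F : X → M) (x₀ : X) :
    Fintype.card X • ∑ g : G, F (g • x₀) = Fintype.card G • ∑ x, F x := by
  have hconst : ∀ x, ∑ g : G, F (g • x) = ∑ g : G, F (g • x₀) := by
    intro x
    obtain ⟨h, rfl⟩ := exists_smul_eq G x₀ x
    simp_rw [smul_smul]
    exact Fintype.sum_equiv (Equiv.mulRight h) _ _ fun _ ↦ rfl
  calc Fintype.card X • ∑ g : G, F (g • x₀) = ∑ x : X, ∑ g : G, F (g • x) := by
        rw [Finset.sum_congr rfl fun x _ ↦ hconst x, Finset.sum_const, Finset.card_univ]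
    _ = ∑ g : G, ∑ x, F (g • x) := Finset.sum_comm
    _ = Fintype.card G • ∑ x, F x := by
        rw [← Finset.card_univ, ← Finset.sum_const]
        exact Finset.sum_congr rfl fun g _ ↦ Fintype.sum_equiv (MulAction.toPerm g) _ F fun _ ↦ rfl

lemma sum_perm_comp_embedding {m n : ℕ} (f₀ : Fin m ↪ Fin n) (F : (Fin m → Fin n) → ℝ) :
    ∑ σ : Equiv.Perm (Fin n), F (σ ∘ f₀) =
      (n.factorial / n.descFactorial m : ℝ) *
        ∑ f : {f : Fin m → Fin n // Function.Injective f}, F f := by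
  have _ := Equiv.Perm.isMultiplyPretransitive (Fin n) m
  have hN : (n.descFactorial m : ℝ) ≠ 0 := by
    have := Fintype.card_pos_iff.2 ⟨f₀⟩
    rw [Fintype.card_embedding_eq, Fintype.card_fin, Fintype.card_fin] at this
    exact_mod_cast this.ne'
  have h := MulAction.card_nsmul_sum_smul (G := Equiv.Perm (Fin n))
    (fun f : Fin m ↪ Fin n ↦ F f) f₀
  rw [Fintype.card_embedding_eq, Fintype.card_perm, Fintype.card_fin, Fintype.card_fin,
    nsmul_eq_mul, nsmul_eq_mul,
    ← Fintype.sum_equiv (Equiv.subtypeInjectiveEquivEmbedding (Fin m) (Fin n)) (fun f ↦ F f) _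
      fun _ ↦ rfl] at h
  rw [div_mul_eq_mul_div, eq_div_iff hN, mul_comm, ← h]
  rfl

lemma sum_injective_eq_sum_perm_blocks {m n k : ℕ} (hk : k ≠ 0) (e : Fin k × Fin m ↪ Fin n)
    (F : (Fin m → Fin n) → ℝ) :
    1 / (n.descFactorial m : ℝ) * ∑ f : {f : Fin m → Fin n // Function.Injective f}, F f =
      ∑ σ : Equiv.Perm (Fin n),
        (n.factorial : ℝ)⁻¹ * ∑ j : Fin k, (k : ℝ)⁻¹ * F (fun i ↦ σ (e (j, i))) := by
  have hblock : ∀ j : Fin k, ∑ σ : Equiv.Perm (Fin n), F (fun i ↦ σ (e (j, i))) =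
      (n.factorial / n.descFactorial m : ℝ) *
        ∑ f : {f : Fin m → Fin n // Function.Injective f}, F f :=
    fun j ↦ sum_perm_comp_embedding ((Function.Embedding.sectR j (Fin m)).trans e) F
  rw [← Finset.mul_sum, Finset.sum_comm]
  simp_rw [← Finset.mul_sum, hblock, Finset.sum_const, Finset.card_univ, Fintype.card_fin,
    nsmul_eq_mul]
  have : (k : ℝ) ≠ 0 := by exact_mod_cast hk
  field_simp

lemma ProbabilityTheory.iIndepFun.curry {Ω ι κ β : Type*} [MeasurableSpace Ω] [MeasurableSpace β]
    {P : Measure Ω} {X : ι × κ → Ω → β} (mX : ∀ p, Measurable (X p)) (h : iIndepFun X P) :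
    iIndepFun (fun i ω j ↦ X (i, j) ω) P := by
  have := h.isProbabilityMeasure
  have _ p := Measure.isProbabilityMeasure_map (μ := P) (mX p).aemeasurable
  have hrow : ∀ i, P.map (fun ω j ↦ X (i, j) ω) = Measure.infinitePi fun j ↦ P.map (X (i, j)) :=
    fun i ↦ (h.precomp (Prod.mk_right_injective i)).map_fun_eq_infinitePi_map fun j ↦ mX (i, j)
  rw [iIndepFun_iff_map_fun_eq_infinitePi_map (fun i ↦ measurable_pi_lambda _ fun j ↦ mX (i, j))]
  simp_rw [hrow]
  rw [← Measure.infinitePi_map_curry (fun i j ↦ P.map (X (i, j))),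
    ← h.map_fun_eq_infinitePi_map mX, Measure.map_map (by fun_prop) (measurable_pi_lambda _ mX)]
  rfl

section SubGaussian

variable {Ω : Type*} [MeasurableSpace Ω] {μ : Measure Ω}

lemma sum_mul_sub_integral {ι : Type*} {X : ι → Ω → ℝ} {s : Finset ι} (w : ι → ℝ)
    (hX : ∀ i ∈ s, Integrable (X i) μ) (ω : Ω) :
    ∑ i ∈ s, w i * X i ω - μ[fun ω ↦ ∑ i ∈ s, w i * X i ω] =
      ∑ i ∈ s, w i * (X i ω - μ[X i]) := by
  rw [integral_finsetSum _ fun i hi ↦ (hX i hi).const_mul _]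
  simp_rw [integral_const_mul, mul_sub, Finset.sum_sub_distrib]

lemma ProbabilityTheory.HasSubgaussianMGF.sum_mul_of_sum_eq_one {ι : Type*} {X : ι → Ω → ℝ}
    {c : NNReal} {s : Finset ι} {w : ι → ℝ} (hX : ∀ i ∈ s, HasSubgaussianMGF (X i) c μ)
    (hw₀ : ∀ i ∈ s, 0 ≤ w i) (hw₁ : ∑ i ∈ s, w i = 1) :
    HasSubgaussianMGF (fun ω ↦ ∑ i ∈ s, w i * X i ω) c μ := by
  have hjensen : ∀ t ω, Real.exp (t * ∑ i ∈ s, w i * X i ω)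
      ≤ ∑ i ∈ s, w i * Real.exp (t * X i ω) := fun t ω ↦ by
    simpa [Finset.mul_sum, mul_left_comm t] using
      convexOn_exp.map_sum_le hw₀ hw₁ (p := fun i ↦ t * X i ω) fun _ _ ↦ Set.mem_univ _
  have hdom : ∀ t, Integrable (fun ω ↦ ∑ i ∈ s, w i * Real.exp (t * X i ω)) μ := fun t ↦
    integrable_finsetSum _ fun i hi ↦ ((hX i hi).integrable_exp_mul t).const_mul _
  have hmeas : ∀ t, AEStronglyMeasurable (fun ω ↦ Real.exp (t * ∑ i ∈ s, w i * X i ω)) μ :=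
    fun t ↦ Real.continuous_exp.comp_aestronglyMeasurable
      ((Finset.aestronglyMeasurable_fun_sum _ fun i hi ↦
        (hX i hi).aestronglyMeasurable.const_mul (w i)).const_mul t)
  have hint : ∀ t, Integrable (fun ω ↦ Real.exp (t * ∑ i ∈ s, w i * X i ω)) μ := fun t ↦
    (hdom t).mono' (hmeas t) (ae_of_all _ fun ω ↦ by
      rw [Real.norm_of_nonneg (Real.exp_pos _).le]; exact hjensen t ω)
  refine ⟨hint, fun t ↦ ?_⟩
  calc mgf (fun ω ↦ ∑ i ∈ s, w i * X i ω) μ t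
      ≤ ∑ i ∈ s, w i * mgf (X i) μ t := by
        simp_rw [mgf, ← integral_const_mul]
        rw [← integral_finsetSum _ fun i hi ↦ ((hX i hi).integrable_exp_mul t).const_mul _]
        exact integral_mono (hint t) (hdom t) (hjensen t)
    _ ≤ ∑ i ∈ s, w i * Real.exp (c * t ^ 2 / 2) :=
        Finset.sum_le_sum fun i hi ↦ mul_le_mul_of_nonneg_left ((hX i hi).mgf_le t) (hw₀ i hi)
    _ = Real.exp (c * t ^ 2 / 2) := by rw [← Finset.sum_mul, hw₁, one_mul]

lemma ProbabilityTheory.iIndepFun.hasSubgaussianMGF_average [IsProbabilityMeasure μ] {ι : Type*}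
    [Fintype ι] {Y : ι → Ω → ℝ} (hY : iIndepFun Y μ) (hYm : ∀ i, Measurable (Y i)) {a b : ℝ}
    (hb : ∀ i ω, Y i ω ∈ Set.Icc a b) :
    HasSubgaussianMGF
      (fun ω ↦ ∑ i, (Fintype.card ι : ℝ)⁻¹ * Y i ω
        - μ[fun ω ↦ ∑ i, (Fintype.card ι : ℝ)⁻¹ * Y i ω])
      ((‖b - a‖₊ / 2) ^ 2 / Fintype.card ι) μ := by
  set K : ℝ := (Fintype.card ι : ℝ)
  set N : NNReal := (Fintype.card ι : NNReal)
  have hcentered : ∀ i, HasSubgaussianMGF (fun ω ↦ K⁻¹ * (Y i ω - μ[Y i]))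
      (N⁻¹ ^ 2 * (‖b - a‖₊ / 2) ^ 2) μ := fun i ↦ by
    have h := (hasSubgaussianMGF_of_mem_Icc (μ := μ) (hYm i).aemeasurable
      (ae_of_all _ (hb i))).const_mul K⁻¹
    rwa [show (⟨K⁻¹ ^ 2, sq_nonneg K⁻¹⟩ : NNReal) = N⁻¹ ^ 2 from
      NNReal.eq (by show K⁻¹ ^ 2 = ((N⁻¹ ^ 2 : NNReal) : ℝ); simp [N, K])] at h
  have hindep : iIndepFun (fun i ω ↦ K⁻¹ * (Y i ω - μ[Y i])) μ := by
    have h := hY.comp (fun i (x : ℝ) ↦ K⁻¹ * (x - μ[Y i])) fun i ↦ by fun_prop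
    exact h
  have hsum := HasSubgaussianMGF.sum_of_iIndepFun hindep (s := univ) fun i _ ↦ hcentered i
  simp_rw [sum_mul_sub_integral _ fun i _ ↦
    Integrable.of_mem_Icc a b (hYm i).aemeasurable (ae_of_all _ (hb i))]
  rw [Finset.sum_const, Finset.card_univ, nsmul_eq_mul] at hsum
  convert hsum using 1
  rcases eq_or_ne N 0 with hN | hN
  · simp [hN]
  · rw [sq N⁻¹, ← mul_assoc, ← mul_assoc, mul_inv_cancel₀ hN, one_mul, div_eq_inv_mul]

lemma ProbabilityTheory.iIndepFun.hasSubgaussianMGF_blockMean [IsProbabilityMeasure μ]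
    {ι κ β α : Type*} [Fintype κ] [MeasurableSpace α] {W : ι → Ω → α}
    (hW : ∀ i, Measurable (W i)) (hindep : iIndepFun W μ) (e : κ × β ↪ ι)
    {g : (β → α) → ℝ} (hg : Measurable g) {a b : ℝ} (hb : ∀ v, g v ∈ Set.Icc a b) :
    HasSubgaussianMGF
      (fun ω ↦ ∑ j, (Fintype.card κ : ℝ)⁻¹ * g (fun i ↦ W (e (j, i)) ω)
        - μ[fun ω ↦ ∑ j, (Fintype.card κ : ℝ)⁻¹ * g (fun i ↦ W (e (j, i)) ω)])
      ((‖b - a‖₊ / 2) ^ 2 / Fintype.card κ) μ := by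
  have hblocks : iIndepFun (fun j ω i ↦ W (e (j, i)) ω) μ :=
    (hindep.precomp e.injective).curry fun p ↦ hW (e p)
  exact (hblocks.comp (fun _ ↦ g) fun _ ↦ hg).hasSubgaussianMGF_average
    (fun j ↦ hg.comp (measurable_pi_lambda _ fun i ↦ hW _)) fun _ _ ↦ hb _

lemma ProbabilityTheory.HasSubgaussianMGF.measure_lt_abs_le [IsFiniteMeasure μ] {X : Ω → ℝ}
    {c : NNReal} (h : HasSubgaussianMGF X c μ) {ε : ℝ} (hε : 0 ≤ ε) :
    μ {ω | ε < |X ω|} ≤ ENNReal.ofReal (2 * Real.exp (-ε ^ 2 / (2 * c))) := by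
  have hsub : {ω | ε < |X ω|} ⊆ {ω | ε ≤ X ω} ∪ {ω | ε ≤ (-X) ω} := fun ω hω ↦ by
    rcases lt_abs.1 (show ε < |X ω| from hω) with h | h
    · exact Or.inl h.le
    · exact Or.inr h.le
  calc μ {ω | ε < |X ω|} ≤ μ {ω | ε ≤ X ω} + μ {ω | ε ≤ (-X) ω} :=
        (measure_mono hsub).trans (measure_union_le _ _)
    _ = ENNReal.ofReal (μ.real {ω | ε ≤ X ω}) + ENNReal.ofReal (μ.real {ω | ε ≤ (-X) ω}) := by
        rw [ofReal_measureReal, ofReal_measureReal]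
    _ ≤ ENNReal.ofReal (Real.exp (-ε ^ 2 / (2 * c)))
          + ENNReal.ofReal (Real.exp (-ε ^ 2 / (2 * c))) :=
        add_le_add (ENNReal.ofReal_le_ofReal (h.measure_ge_le hε))
          (ENNReal.ofReal_le_ofReal (h.neg.measure_ge_le hε))
    _ = ENNReal.ofReal (2 * Real.exp (-ε ^ 2 / (2 * c))) := by
        rw [← ENNReal.ofReal_add (by positivity) (by positivity), ← two_mul]

end SubGaussian

theorem stmt1_general {Ω α : Type*} [MeasurableSpace Ω] [MeasurableSpace α]
    (μ : Measure Ω) [IsProbabilityMeasure μ]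
    (n m : ℕ) (hm : 0 < m) (hmn : m ≤ n)
    (W : Fin n → Ω → α)
    (hWmeas : ∀ i, Measurable (W i))
    (hWindep : iIndepFun W μ)
    (g : (Fin m → α) → ℝ) (hg : Measurable g)
    (a b : ℝ)
    (hbound : ∀ v : Fin m → α, a ≤ g v ∧ g v ≤ b)
    (U : Ω → ℝ)
    (hU : U = fun ω => (1 / (n.descFactorial m : ℝ)) *
      ∑ ι : {f : Fin m → Fin n // Function.Injective f}, g (fun k => W (ι.1 k) ω))
    (t : ℝ) (ht : 0 < t) :
    μ {ω | t < |U ω - ∫ ω', U ω' ∂μ|} ≤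
      ENNReal.ofReal (2 * Real.exp (-2 * (n / m : ℕ) * t ^ 2 / (b - a) ^ 2)) := by
  set k := n / m
  have hk : k ≠ 0 := (Nat.div_pos hmn hm).ne'
  let e : Fin k × Fin m ↪ Fin n :=
    finProdFinEquiv.toEmbedding.trans (Fin.castLEEmb (Nat.div_mul_le_self n m))
  let V : Equiv.Perm (Fin n) → Ω → ℝ :=
    fun σ ω ↦ ∑ j : Fin k, (k : ℝ)⁻¹ * g (fun i ↦ W (σ (e (j, i))) ω)
  have hUV : U = fun ω ↦ ∑ σ, (n.factorial : ℝ)⁻¹ * V σ ω := by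
    rw [hU]
    ext ω
    exact sum_injective_eq_sum_perm_blocks hk e fun f ↦ g fun i ↦ W (f i) ω
  have hV : ∀ σ, HasSubgaussianMGF (fun ω ↦ V σ ω - μ[V σ]) ((‖b - a‖₊ / 2) ^ 2 / k) μ :=
    fun σ ↦ by
      simpa using hWindep.hasSubgaussianMGF_blockMean hWmeas (e.trans σ.toEmbedding) hg hbound
  have hU_sub : HasSubgaussianMGF (fun ω ↦ U ω - μ[U]) ((‖b - a‖₊ / 2) ^ 2 / k) μ := by
    have hcenter : (fun ω ↦ U ω - μ[U]) =
        fun ω ↦ ∑ σ, (n.factorial : ℝ)⁻¹ * (V σ ω - μ[V σ]) := by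
      rw [hUV]
      ext ω
      exact sum_mul_sub_integral _ (fun σ _ ↦ integrable_add_const_iff.1
        (by simpa only [sub_eq_add_neg] using (hV σ).integrable)) ω
    rw [hcenter]
    refine HasSubgaussianMGF.sum_mul_of_sum_eq_one (fun σ _ ↦ hV σ) (fun _ _ ↦ by positivity) ?_
    simp [Finset.card_univ, Fintype.card_perm, n.factorial_ne_zero]
  calc μ {ω | t < |U ω - ∫ ω', U ω' ∂μ|}
      ≤ ENNReal.ofReal (2 * Real.exp (-t ^ 2 / (2 * ((‖b - a‖₊ / 2) ^ 2 / k : NNReal)))) :=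
        hU_sub.measure_lt_abs_le ht.le
    _ = ENNReal.ofReal (2 * Real.exp (-2 * (n / m : ℕ) * t ^ 2 / (b - a) ^ 2)) := by
        congr 3
        push_cast
        rw [Real.norm_eq_abs, div_pow, sq_abs]
        field_simp
        ring

/-- Hoeffding's inequality for one-sample U-statistics: if
`U = (1/n^(m)) Σ g(W_{i₁},…,W_{i_m})` with the sum over all `m`-tuples of
distinct indices among `n` independent random variables `W_i`, and
`a ≤ g ≤ b` pointwise, then for any `t > 0` and `m ≤ n`,
`Pr(|U − E[U]| > t) ≤ 2 exp(−2⌊n/m⌋t²/(b−a)²)`. -/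
theorem stmt1 {Ω α : Type*} [MeasurableSpace Ω] [MeasurableSpace α]
    (μ : Measure Ω) [IsProbabilityMeasure μ]
    (n m : ℕ) (hm : 0 < m) (hmn : m ≤ n)
    (W : Fin n → Ω → α)
    (hWmeas : ∀ i, Measurable (W i))
    (hWindep : iIndepFun W μ)
    (g : (Fin m → α) → ℝ) (hg : Measurable g)
    (a b : ℝ) (hab : a < b)
    (hbound : ∀ v : Fin m → α, a ≤ g v ∧ g v ≤ b)
    (U : Ω → ℝ)
    (hU : U = fun ω => (1 / (n.descFactorial m : ℝ)) *
      ∑ ι : {f : Fin m → Fin n // Function.Injective f}, g (fun k => W (ι.1 k) ω))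
    (t : ℝ) (ht : 0 < t) :
    μ {ω | t < |U ω - ∫ ω', U ω' ∂μ|} ≤
      ENNReal.ofReal (2 * Real.exp (-2 * (n / m : ℕ) * t ^ 2 / (b - a) ^ 2)) :=
  stmt1_general μ n m hm hmn W hWmeas hWindep g hg a b hbound U hU t ht
end

section
/- Let τ̂ be the sample Kendall's tau from n i.i.d. observations of a continuous pair (X_j, X_{j'}). Suppose log p = C₃ n^ξ with ξ ∈ (0, 1−2κ), and min_{(j,j')∈E}|ρ_{jj'}| ≥ C₁ n^{−κ}. Then with threshold γ_n = (2/3)C₁ n^{−κ}, Pr(E ⊆ Ê_{γ_n}) ≥ 1 − 2p² exp(−(2⌊n/2⌋/(9π²)) C₁² n^{−2κ}). -/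
/-!
The sample Kendall's tau is a U-statistic of order two whose kernel takes values in `[-1, 1]`.
Hoeffding's representation writes it as an average, over all permutations of the sample, of
means of `⌊n/2⌋` independent terms with mean `τ`. By Hoeffding's lemma each such mean is
sub-Gaussian with variance proxy `1/⌊n/2⌋`, and by Jensen's inequality for `exp` so is their
average; hence `P(|τ̂ - τ| ≥ t) ≤ 2 exp(-⌊n/2⌋ t² / 2)`. Since `sin` is `1`-Lipschitz,
`|τ̂ - τ| < 2 C₁ n^(-κ) / (3π)` gives `|sin((π/2) τ̂)| > |ρ| - C₁ n^(-κ) / 3 ≥ γ_n`, and a union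
bound over the at most `p²` pairs of `E` concludes.
-/

open MeasureTheory ProbabilityTheory Real Finset
open scoped ENNReal NNReal

namespace ProbabilityTheory.HasSubgaussianMGF

variable {Ω ι : Type*} [MeasurableSpace Ω] {μ : Measure Ω}

lemma sum_of_indepFun_sum {Y : ι → Ω → ℝ} {c : ι → ℝ≥0} {s : Finset ι}
    (h_subG : ∀ i ∈ s, HasSubgaussianMGF (Y i) (c i) μ)
    (h_indep : ∀ t ⊆ s, ∀ k ∈ s, k ∉ t → IndepFun (fun ω ↦ ∑ i ∈ t, Y i ω) (Y k) μ)
    [IsZeroOrProbabilityMeasure μ] :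
    HasSubgaussianMGF (fun ω ↦ ∑ i ∈ s, Y i ω) (∑ i ∈ s, c i) μ := by
  classical
  induction s using Finset.induction_on with
  | empty => simp [fun_zero]
  | insert k s hk ih =>
    simp_rw [Finset.sum_insert hk]
    have hs : s ⊆ insert k s := Finset.subset_insert k s
    refine (h_subG k (Finset.mem_insert_self k s)).add_of_indepFun
      (ih (fun i hi ↦ h_subG i (hs hi)) fun t ht j hj ↦ h_indep t (ht.trans hs) j (hs hj)) ?_
    exact (h_indep s hs k (Finset.mem_insert_self k s) hk).symm

lemma sum_mul_of_sum_eq_one_s18 [IsFiniteMeasure μ] {Y : ι → Ω → ℝ} {c : ℝ≥0} {s : Finset ι}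
    {w : ι → ℝ} (hw₀ : ∀ i ∈ s, 0 ≤ w i) (hw₁ : ∑ i ∈ s, w i = 1)
    (h_subG : ∀ i ∈ s, HasSubgaussianMGF (Y i) c μ) :
    HasSubgaussianMGF (fun ω ↦ ∑ i ∈ s, w i * Y i ω) c μ := by
  have jensen : ∀ t ω, exp (t * ∑ i ∈ s, w i * Y i ω) ≤ ∑ i ∈ s, w i * exp (t * Y i ω) := by
    intro t ω
    have := convexOn_exp.map_sum_le hw₀ hw₁ (p := fun i ↦ t * Y i ω) (by simp)
    simpa [Finset.mul_sum, mul_left_comm] using this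
  have h_int : ∀ t, Integrable (fun ω ↦ ∑ i ∈ s, w i * exp (t * Y i ω)) μ := fun t ↦
    integrable_finsetSum _ fun i hi ↦ ((h_subG i hi).integrable_exp_mul t).const_mul _
  have h_meas : AEStronglyMeasurable (fun ω ↦ ∑ i ∈ s, w i * Y i ω) μ :=
    Finset.aestronglyMeasurable_fun_sum _ fun i hi ↦
      (h_subG i hi).aestronglyMeasurable.const_mul _
  refine ⟨fun t ↦ (h_int t).mono'
    (continuous_exp.comp_aestronglyMeasurable (h_meas.const_mul t))
    (ae_of_all _ fun ω ↦ by simpa using jensen t ω), fun t ↦ ?_⟩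
  calc mgf (fun ω ↦ ∑ i ∈ s, w i * Y i ω) μ t
      ≤ ∫ ω, ∑ i ∈ s, w i * exp (t * Y i ω) ∂μ :=
        integral_mono_of_nonneg (ae_of_all _ fun _ ↦ (exp_pos _).le) (h_int t)
          (ae_of_all _ (jensen t))
    _ = ∑ i ∈ s, w i * mgf (Y i) μ t := by
        rw [integral_finsetSum _ fun i hi ↦ ((h_subG i hi).integrable_exp_mul t).const_mul _]
        simp_rw [integral_const_mul, mgf]
    _ ≤ ∑ i ∈ s, w i * exp (c * t ^ 2 / 2) :=
        Finset.sum_le_sum fun i hi ↦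
          mul_le_mul_of_nonneg_left ((h_subG i hi).mgf_le t) (hw₀ i hi)
    _ = exp (c * t ^ 2 / 2) := by rw [← Finset.sum_mul, hw₁, one_mul]

lemma measure_abs_ge_le [IsFiniteMeasure μ] {X : Ω → ℝ} {c : ℝ≥0}
    (h : HasSubgaussianMGF X c μ) {ε : ℝ} (hε : 0 ≤ ε) :
    μ {ω | ε ≤ |X ω|} ≤ ENNReal.ofReal (2 * exp (-ε ^ 2 / (2 * c))) := by
  have h_union : {ω | ε ≤ |X ω|} = {ω | ε ≤ X ω} ∪ {ω | ε ≤ (-X) ω} := by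
    ext ω; simp [le_abs', or_comm, le_neg]
  calc μ {ω | ε ≤ |X ω|} ≤ μ {ω | ε ≤ X ω} + μ {ω | ε ≤ (-X) ω} :=
        h_union ▸ measure_union_le _ _
    _ ≤ ENNReal.ofReal (exp (-ε ^ 2 / (2 * c))) +
          ENNReal.ofReal (exp (-ε ^ 2 / (2 * c))) := by
        gcongr <;> rw [← ofReal_measureReal]
        · exact ENNReal.ofReal_le_ofReal (h.measure_ge_le hε)
        · exact ENNReal.ofReal_le_ofReal (h.neg.measure_ge_le hε)
    _ = ENNReal.ofReal (2 * exp (-ε ^ 2 / (2 * c))) := by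
        rw [← ENNReal.ofReal_add (exp_pos _).le (exp_pos _).le]; ring_nf

end ProbabilityTheory.HasSubgaussianMGF

section Combinatorics

variable {α : Type*} [Fintype α] [DecidableEq α]

omit [Fintype α] in
lemma Equiv.Perm.exists_apply_eq_and_apply_eq {u v x y : α} (huv : u ≠ v) (hxy : x ≠ y) :
    ∃ f : Equiv.Perm α, f u = x ∧ f v = y := by
  refine ⟨Equiv.swap (Equiv.swap u x v) y * Equiv.swap u x, ?_, by simp⟩
  have hv : Equiv.swap u x v ≠ x := fun h ↦
    huv ((Equiv.swap u x).injective (by rw [h, Equiv.swap_apply_left]))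
  simp [Equiv.swap_apply_of_ne_of_ne hv.symm hxy]

lemma sum_perm_apply_apply_eq (h : α → α → ℝ) {x y u v : α} (hxy : x ≠ y) (huv : u ≠ v) :
    ∑ σ : Equiv.Perm α, h (σ x) (σ y) = ∑ σ : Equiv.Perm α, h (σ u) (σ v) := by
  obtain ⟨f, hfu, hfv⟩ := Equiv.Perm.exists_apply_eq_and_apply_eq huv hxy
  rw [← Equiv.sum_comp (Equiv.mulRight f) (fun σ ↦ h (σ u) (σ v))]
  simp [hfu, hfv]

lemma sum_sum_ite_comp_perm (h : α → α → ℝ) (σ : Equiv.Perm α) :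
    (∑ u, ∑ v, if u = v then 0 else h (σ u) (σ v)) = ∑ u, ∑ v, if u = v then 0 else h u v := by
  calc (∑ u, ∑ v, if u = v then 0 else h (σ u) (σ v))
      = ∑ u, ∑ v, if σ u = σ v then 0 else h (σ u) (σ v) := by simp
    _ = ∑ u, ∑ v, if σ u = v then 0 else h (σ u) v :=
        Finset.sum_congr rfl fun u _ ↦ Equiv.sum_comp σ fun v ↦ if σ u = v then 0 else h (σ u) v
    _ = ∑ u, ∑ v, if u = v then 0 else h u v :=
        Equiv.sum_comp σ fun u ↦ ∑ v, if u = v then 0 else h u v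

lemma sum_sum_ite_const (c : ℝ) :
    (∑ u : α, ∑ v : α, if u = v then 0 else c) = Fintype.card α * (Fintype.card α - 1) * c := by
  have (u v : α) : (if u = v then 0 else c) = c - if u = v then c else 0 := by
    split_ifs <;> simp
  simp only [this, Finset.sum_sub_distrib, Finset.sum_ite_eq, Finset.mem_univ, if_true,
    Finset.sum_const, Finset.card_univ, nsmul_eq_mul]
  ring

lemma card_mul_card_sub_one_mul_sum_perm (h : α → α → ℝ) {x y : α} (hxy : x ≠ y) :
    Fintype.card α * (Fintype.card α - 1) * ∑ σ : Equiv.Perm α, h (σ x) (σ y) =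
      (Fintype.card α).factorial * ∑ u, ∑ v, if u = v then 0 else h u v := by
  have h_swap (u v : α) : (if u = v then 0 else ∑ σ : Equiv.Perm α, h (σ u) (σ v)) =
      ∑ σ : Equiv.Perm α, if u = v then 0 else h (σ u) (σ v) := by
    split_ifs <;> simp
  calc Fintype.card α * (Fintype.card α - 1) * ∑ σ : Equiv.Perm α, h (σ x) (σ y)
      = ∑ u, ∑ v, if u = v then 0 else ∑ σ : Equiv.Perm α, h (σ x) (σ y) :=
        (sum_sum_ite_const _).symm
    _ = ∑ u, ∑ v, if u = v then 0 else ∑ σ : Equiv.Perm α, h (σ u) (σ v) := by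
        refine Finset.sum_congr rfl fun u _ ↦ Finset.sum_congr rfl fun v _ ↦ ?_
        split_ifs with huv
        · rfl
        · exact sum_perm_apply_apply_eq h hxy huv
    _ = ∑ σ : Equiv.Perm α, ∑ u, ∑ v, if u = v then 0 else h (σ u) (σ v) := by
        simp only [h_swap]
        exact (Finset.sum_congr rfl fun u _ ↦ Finset.sum_comm).trans Finset.sum_comm
    _ = _ := by
        rw [Finset.sum_congr rfl fun σ _ ↦ sum_sum_ite_comp_perm h σ, Finset.sum_const,
          Finset.card_univ, Fintype.card_perm, nsmul_eq_mul]

end Combinatorics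

lemma sum_sum_ite_eq_two_mul_sum_lt {α : Type*} [Fintype α] [LinearOrder α] {h : α → α → ℝ}
    (h_symm : ∀ u v, h u v = h v u) :
    (∑ u, ∑ v, if u = v then 0 else h u v) =
      2 * ∑ q ∈ univ.filter (fun q : α × α ↦ q.1 < q.2), h q.1 q.2 := by
  have h_split (u v : α) : (if u = v then 0 else h u v) =
      (if u < v then h u v else 0) + (if v < u then h v u else 0) := by
    rcases lt_trichotomy u v with huv | rfl | huv
    · simp [huv, huv.ne, huv.not_gt]
    · simp
    · simp [huv, huv.ne', huv.not_gt, h_symm u v]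
  rw [Finset.sum_filter, Fintype.sum_prod_type]
  simp only [h_split, Finset.sum_add_distrib]
  rw [Finset.sum_comm (f := fun u v ↦ if v < u then h v u else 0)]
  ring

noncomputable section UStatistic

variable {β : Type*} {n : ℕ}

def uStatistic (g : β → β → ℝ) (x : Fin n → β) : ℝ :=
  2 / (n * (n - 1) : ℝ) * ∑ q ∈ univ.filter (fun q : Fin n × Fin n ↦ q.1 < q.2), g (x q.1) (x q.2)

def blockFst (n : ℕ) (k : Fin (n / 2)) : Fin n := ⟨2 * k, by omega⟩

def blockSnd (n : ℕ) (k : Fin (n / 2)) : Fin n := ⟨2 * k + 1, by omega⟩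

lemma blockFst_ne_blockSnd (k l : Fin (n / 2)) : blockFst n k ≠ blockSnd n l := by
  simp only [blockFst, blockSnd, ne_eq, Fin.mk.injEq]; omega

lemma blockFst_injective : Function.Injective (blockFst n) := fun k l h ↦ by
  simp only [blockFst, Fin.mk.injEq] at h; omega

lemma blockSnd_injective : Function.Injective (blockSnd n) := fun k l h ↦ by
  simp only [blockSnd, Fin.mk.injEq] at h; omega

def pairBlockMean (g : β → β → ℝ) (x : Fin n → β) : ℝ :=
  ((n / 2 : ℕ) : ℝ)⁻¹ * ∑ k, g (x (blockFst n k)) (x (blockSnd n k))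

/-- Hoeffding's representation: a U-statistic of order two is the average, over all
permutations of the sample, of means over the `⌊n/2⌋` disjoint pairs `(2k, 2k+1)`. -/
lemma uStatistic_eq_sum_perm (hn : 2 ≤ n) {g : β → β → ℝ} (hg : ∀ x y, g x y = g y x)
    (x : Fin n → β) :
    uStatistic g x =
      ∑ σ : Equiv.Perm (Fin n), (n.factorial : ℝ)⁻¹ * pairBlockMean g (x ∘ σ) := by
  set h : Fin n → Fin n → ℝ := fun u v ↦ g (x u) (x v)
  have h01 : (⟨0, zero_lt_two.trans_le hn⟩ : Fin n) ≠ ⟨1, hn⟩ := by simp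
  have h_blocks : ∑ σ : Equiv.Perm (Fin n), pairBlockMean g (x ∘ σ) =
      ∑ σ : Equiv.Perm (Fin n), h (σ ⟨0, zero_lt_two.trans_le hn⟩) (σ ⟨1, hn⟩) := by
    have hm : ((n / 2 : ℕ) : ℝ) ≠ 0 := by norm_cast; omega
    simp only [pairBlockMean, Function.comp_apply, ← Finset.mul_sum]
    rw [Finset.sum_comm, Finset.sum_congr rfl fun k _ ↦
      sum_perm_apply_apply_eq h (blockFst_ne_blockSnd k k) h01]
    simp [hm]
  have h_pairs := card_mul_card_sub_one_mul_sum_perm h h01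
  rw [sum_sum_ite_eq_two_mul_sum_lt fun u v ↦ hg _ _, Fintype.card_fin] at h_pairs
  have hn₂ : (2 : ℝ) ≤ n := by exact_mod_cast hn
  have hn₀ : (n : ℝ) ≠ 0 := by positivity
  have hn₁ : (n : ℝ) - 1 ≠ 0 := by linarith
  rw [← Finset.mul_sum, h_blocks, uStatistic]
  field_simp
  linear_combination -h_pairs

end UStatistic

section Sampling

variable {Ω ι κ β : Type*} [MeasurableSpace Ω] {μ : Measure Ω} [MeasurableSpace β]

lemma ProbabilityTheory.iIndepFun.indepFun_sum_pairs {X : ι → Ω → β}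
    (hX : iIndepFun X μ) (hXm : ∀ i, Measurable (X i)) {g : β → β → ℝ}
    (hg : Measurable fun z : β × β ↦ g z.1 z.2) {a b : κ → ι} (ha : Function.Injective a)
    (hb : Function.Injective b) (hab : ∀ k l, a k ≠ b l) {t : Finset κ} {k : κ} (hk : k ∉ t) :
    IndepFun (fun ω ↦ ∑ i ∈ t, g (X (a i) ω) (X (b i) ω))
      (fun ω ↦ g (X (a k) ω) (X (b k) ω)) μ := by
  classical
  set S := t.image a ∪ t.image b
  set T : Finset ι := {a k, b k}
  have hST : Disjoint S T := by
    simp only [S, T, Finset.disjoint_left, Finset.mem_union, Finset.mem_image,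
      Finset.mem_insert, Finset.mem_singleton]
    rintro _ (⟨i, hi, rfl⟩ | ⟨i, hi, rfl⟩) (h | h)
    all_goals first
      | exact hk (ha h ▸ hi) | exact hk (hb h ▸ hi) | exact hab _ _ h | exact hab _ _ h.symm
  have haS : ∀ i ∈ t, a i ∈ S := fun i hi ↦ mem_union_left _ (mem_image_of_mem a hi)
  have hbS : ∀ i ∈ t, b i ∈ S := fun i hi ↦ mem_union_right _ (mem_image_of_mem b hi)
  have h_indep := (hX.indepFun_finset S T hST hXm).comp
    (φ := fun v : S → β ↦ ∑ i ∈ t.attach, g (v ⟨a i, haS i i.2⟩) (v ⟨b i, hbS i i.2⟩))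
    (ψ := fun v : T → β ↦ g (v ⟨a k, by simp [T]⟩) (v ⟨b k, by simp [T]⟩))
    (by fun_prop) (by fun_prop)
  convert h_indep using 1
  · exact funext fun ω ↦ (Finset.sum_attach t fun i ↦ g (X (a i) ω) (X (b i) ω)).symm
  · rfl

lemma identDistrib_prodMk_of_iIndepFun {X : ι → Ω → β} (hX : iIndepFun X μ)
    (hXm : ∀ i, Measurable (X i)) (hXident : ∀ i i', IdentDistrib (X i) (X i') μ μ)
    {i j i' j' : ι} (hij : i ≠ j) (hij' : i' ≠ j') :
    IdentDistrib (fun ω ↦ (X i ω, X j ω)) (fun ω ↦ (X i' ω, X j' ω)) μ μ := by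
  have := hX.isProbabilityMeasure
  refine ⟨((hXm i).prodMk (hXm j)).aemeasurable, ((hXm i').prodMk (hXm j')).aemeasurable, ?_⟩
  rw [(indepFun_iff_map_prod_eq_prod_map_map (hXm i).aemeasurable (hXm j).aemeasurable).1
      (hX.indepFun hij),
    (indepFun_iff_map_prod_eq_prod_map_map (hXm i').aemeasurable (hXm j').aemeasurable).1
      (hX.indepFun hij'),
    (hXident i i').map_eq, (hXident j j').map_eq]

end Sampling

section Hoeffding

variable {Ω ι κ β : Type*} [MeasurableSpace Ω] {μ : Measure Ω} [MeasurableSpace β]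

lemma hasSubgaussianMGF_sum_pairs_sub {X : ι → Ω → β}
    (hXm : ∀ i, Measurable (X i)) (hX : iIndepFun X μ)
    (hXident : ∀ i i', IdentDistrib (X i) (X i') μ μ) {g : β → β → ℝ}
    (hg : Measurable fun z : β × β ↦ g z.1 z.2) (hg_mem : ∀ x y, g x y ∈ Set.Icc (-1) 1)
    {a b : κ → ι} (ha : Function.Injective a) (hb : Function.Injective b)
    (hab : ∀ k l, a k ≠ b l) {i₀ i₁ : ι} (hi : i₀ ≠ i₁) (s : Finset κ) :
    HasSubgaussianMGF (fun ω ↦ ∑ k ∈ s,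
      (g (X (a k) ω) (X (b k) ω) - ∫ ω', g (X i₀ ω') (X i₁ ω') ∂μ)) s.card μ := by
  have := hX.isProbabilityMeasure
  have h_term (k : κ) : HasSubgaussianMGF
      (fun ω ↦ g (X (a k) ω) (X (b k) ω) - ∫ ω', g (X i₀ ω') (X i₁ ω') ∂μ) 1 μ := by
    have h_mean : ∫ ω, g (X (a k) ω) (X (b k) ω) ∂μ = ∫ ω, g (X i₀ ω) (X i₁ ω) ∂μ :=
      ((identDistrib_prodMk_of_iIndepFun hX hXm hXident (hab k k) hi).comp hg).integral_eq
    have h := hasSubgaussianMGF_of_mem_Icc (μ := μ) (X := fun ω ↦ g (X (a k) ω) (X (b k) ω))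
      (hg.comp ((hXm _).prodMk (hXm _))).aemeasurable (ae_of_all _ fun ω ↦ hg_mem _ _)
    rw [h_mean] at h
    convert h using 1
    norm_num
  simpa using HasSubgaussianMGF.sum_of_indepFun_sum (s := s) (fun k _ ↦ h_term k)
    fun t _ k _ hk ↦ hX.indepFun_sum_pairs hXm
      (g := fun x y ↦ g x y - ∫ ω', g (X i₀ ω') (X i₁ ω') ∂μ) (hg.sub_const _) ha hb hab hk

theorem hasSubgaussianMGF_uStatistic_sub {n : ℕ} (hn : 2 ≤ n) {X : Fin n → Ω → β}
    (hXm : ∀ i, Measurable (X i)) (hX : iIndepFun X μ)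
    (hXident : ∀ i i', IdentDistrib (X i) (X i') μ μ) {g : β → β → ℝ}
    (hg : Measurable fun z : β × β ↦ g z.1 z.2) (hg_symm : ∀ x y, g x y = g y x)
    (hg_mem : ∀ x y, g x y ∈ Set.Icc (-1) 1) :
    HasSubgaussianMGF (fun ω ↦ uStatistic g (fun i ↦ X i ω) -
        ∫ ω', g (X ⟨0, zero_lt_two.trans_le hn⟩ ω') (X ⟨1, hn⟩ ω') ∂μ)
      ((n / 2 : ℕ) : ℝ≥0)⁻¹ μ := by
  have := hX.isProbabilityMeasure
  set τ₀ := ∫ ω', g (X ⟨0, zero_lt_two.trans_le hn⟩ ω') (X ⟨1, hn⟩ ω') ∂μ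
  have hm : ((n / 2 : ℕ) : ℝ) ≠ 0 := by norm_cast; omega
  set Y : Equiv.Perm (Fin n) → Ω → ℝ := fun σ ω ↦ ((n / 2 : ℕ) : ℝ)⁻¹ *
    ∑ k, (g (X (σ (blockFst n k)) ω) (X (σ (blockSnd n k)) ω) - τ₀)
  have h_eq : (fun ω ↦ uStatistic g (fun i ↦ X i ω) - τ₀) =
      fun ω ↦ ∑ σ, (n.factorial : ℝ)⁻¹ * Y σ ω := by
    funext ω
    rw [uStatistic_eq_sum_perm hn hg_symm]
    simp only [Y, pairBlockMean, Function.comp_apply, Finset.sum_sub_distrib, Finset.sum_const,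
      Finset.card_univ, Fintype.card_fin, Fintype.card_perm, nsmul_eq_mul, mul_sub]
    field_simp [n.factorial_ne_zero]
  have h_block (σ : Equiv.Perm (Fin n)) : HasSubgaussianMGF (Y σ) ((n / 2 : ℕ) : ℝ≥0)⁻¹ μ := by
    have h_sum := hasSubgaussianMGF_sum_pairs_sub hXm hX hXident hg hg_mem
      (σ.injective.comp blockFst_injective) (σ.injective.comp blockSnd_injective)
      (fun k l ↦ σ.injective.ne (blockFst_ne_blockSnd k l))
      (i₀ := ⟨0, zero_lt_two.trans_le hn⟩) (i₁ := ⟨1, hn⟩) (by simp) Finset.univ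
    convert h_sum.const_mul ((n / 2 : ℕ) : ℝ)⁻¹ using 1
    · rfl
    apply NNReal.eq
    -- `const_mul` builds its parameter with an anonymous constructor, which `simp` cannot unfold
    change ((n / 2 : ℕ) : ℝ)⁻¹ = ((n / 2 : ℕ) : ℝ)⁻¹ ^ 2 * ((univ.card : ℕ) : ℝ≥0)
    simp
    field_simp
  rw [h_eq]
  refine HasSubgaussianMGF.sum_mul_of_sum_eq_one_s18 (fun _ _ ↦ by positivity) ?_ fun σ _ ↦ h_block σ
  simp [Fintype.card_perm, n.factorial_ne_zero]

theorem measure_le_abs_uStatistic_sub_le {n : ℕ} (hn : 2 ≤ n) {X : Fin n → Ω → β}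
    (hXm : ∀ i, Measurable (X i)) (hX : iIndepFun X μ)
    (hXident : ∀ i i', IdentDistrib (X i) (X i') μ μ) {g : β → β → ℝ}
    (hg : Measurable fun z : β × β ↦ g z.1 z.2) (hg_symm : ∀ x y, g x y = g y x)
    (hg_mem : ∀ x y, g x y ∈ Set.Icc (-1) 1) {t : ℝ} (ht : 0 ≤ t) :
    μ {ω | t ≤ |uStatistic g (fun i ↦ X i ω) -
        ∫ ω', g (X ⟨0, zero_lt_two.trans_le hn⟩ ω') (X ⟨1, hn⟩ ω') ∂μ|} ≤
      ENNReal.ofReal (2 * exp (-(n / 2 : ℕ) * t ^ 2 / 2)) := by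
  have := hX.isProbabilityMeasure
  convert (hasSubgaussianMGF_uStatistic_sub hn hXm hX hXident hg hg_symm hg_mem).measure_abs_ge_le
    ht using 4
  push_cast
  field_simp

end Hoeffding

lemma one_sub_card_mul_le_measure {Ω ι : Type*} [MeasurableSpace Ω] {μ : Measure Ω}
    [IsProbabilityMeasure μ] {s : Finset ι} {B : ι → Set Ω} {G : Set Ω} {b : ℝ≥0∞}
    (hB : ∀ i ∈ s, μ (B i) ≤ b) (hG : (⋃ i ∈ s, B i)ᶜ ⊆ G) :
    1 - s.card * b ≤ μ G :=
  calc 1 - s.card * b ≤ 1 - μ (⋃ i ∈ s, B i) := by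
        refine tsub_le_tsub_left ((measure_biUnion_finset_le s B).trans ?_) 1
        simpa using Finset.sum_le_sum hB
    _ ≤ μ (⋃ i ∈ s, B i)ᶜ := by
        rw [tsub_le_iff_left, ← measure_univ (μ := μ), ← Set.union_compl_self (⋃ i ∈ s, B i)]
        exact measure_union_le _ _
    _ ≤ μ G := measure_mono hG

lemma Real.measurable_sign : Measurable Real.sign :=
  Measurable.ite measurableSet_Iio measurable_const
    (Measurable.ite measurableSet_Ioi measurable_const measurable_const)

lemma Real.sign_mem_Icc (r : ℝ) : Real.sign r ∈ Set.Icc (-1) 1 := by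
  rcases Real.sign_apply_eq r with h | h | h <;> simp [h]

section Kendall

variable {p : ℕ}

noncomputable def kendallKernel (j j' : Fin p) (x y : Fin p → ℝ) : ℝ :=
  Real.sign ((x j - y j) * (x j' - y j'))

lemma measurable_kendallKernel (j j' : Fin p) :
    Measurable fun z : (Fin p → ℝ) × (Fin p → ℝ) ↦ kendallKernel j j' z.1 z.2 :=
  Real.measurable_sign.comp (by fun_prop)

lemma kendallKernel_comm (j j' : Fin p) (x y : Fin p → ℝ) :
    kendallKernel j j' x y = kendallKernel j j' y x := by
  simp only [kendallKernel]; ring_nf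

end Kendall

lemma lt_abs_sin_of_abs_sub_lt {x y δ : ℝ} (h : |x - y| < δ) :
    |sin (π / 2 * y)| - π / 2 * δ < |sin (π / 2 * x)| := by
  have h_lip : |sin (π / 2 * x) - sin (π / 2 * y)| ≤ π / 2 * |x - y| := by
    simpa [← mul_sub, abs_mul, abs_of_pos (by positivity : (0 : ℝ) < π / 2)]
      using abs_sin_sub_sin_le (π / 2 * x) (π / 2 * y)
  have := abs_sub_abs_le_abs_sub (sin (π / 2 * y)) (sin (π / 2 * x))
  rw [abs_sub_comm] at this
  nlinarith [pi_pos]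

theorem stmt18 {Ω : Type*} [MeasurableSpace Ω] (μ : Measure Ω) [IsProbabilityMeasure μ]
    (p n : ℕ) (hn : 2 ≤ n)
    (X : Fin n → Ω → (Fin p → ℝ))
    (hXmeas : ∀ i, Measurable (X i))
    (hXindep : iIndepFun X μ)
    (hXident : ∀ i i', IdentDistrib (X i) (X i') μ μ)
    (C₁ κ : ℝ) (hC₁ : 0 < C₁)
    (τhat : Fin p × Fin p → Ω → ℝ)
    (hτhat : ∀ e : Fin p × Fin p, τhat e = fun ω => (2 / (n * (n - 1) : ℝ)) *
      ∑ q ∈ Finset.univ.filter (fun q : Fin n × Fin n => q.1 < q.2),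
        Real.sign ((X q.1 ω e.1 - X q.2 ω e.1) * (X q.1 ω e.2 - X q.2 ω e.2)))
    (τ ρ : Fin p × Fin p → ℝ)
    (hτ : ∀ e : Fin p × Fin p, τ e = ∫ ω, Real.sign
      ((X ⟨0, by omega⟩ ω e.1 - X ⟨1, by omega⟩ ω e.1) *
       (X ⟨0, by omega⟩ ω e.2 - X ⟨1, by omega⟩ ω e.2)) ∂μ)
    (hρ : ∀ e, ρ e = Real.sin (Real.pi / 2 * τ e))
    (E : Finset (Fin p × Fin p)) (hE : ∀ e ∈ E, e.1 < e.2)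
    (hmin : ∀ e ∈ E, C₁ * (n : ℝ) ^ (-κ) ≤ |ρ e|) :
    1 - ENNReal.ofReal (2 * p ^ 2 *
        Real.exp (-(2 * (n / 2 : ℕ) / (9 * Real.pi ^ 2)) * C₁ ^ 2 * (n : ℝ) ^ (-(2 * κ)))) ≤
      μ {ω | (E : Set (Fin p × Fin p)) ⊆
        {e | e.1 < e.2 ∧ (2 / 3) * C₁ * (n : ℝ) ^ (-κ) <
          |Real.sin (Real.pi / 2 * τhat e ω)|}} := by
  set δ := 2 / (3 * π) * (C₁ * (n : ℝ) ^ (-κ)) with hδ_def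
  have h_exponent : -((n / 2 : ℕ) : ℝ) * δ ^ 2 / 2 =
      -(2 * (n / 2 : ℕ) / (9 * π ^ 2)) * C₁ ^ 2 * (n : ℝ) ^ (-(2 * κ)) := by
    have h_sq : ((n : ℝ) ^ (-κ)) ^ 2 = (n : ℝ) ^ (-(2 * κ)) := by
      rw [← Real.rpow_natCast, ← Real.rpow_mul (Nat.cast_nonneg n)]; ring_nf
    rw [hδ_def, mul_pow, mul_pow, h_sq]
    field_simp
    ring_nf
  have h_tail : ∀ e ∈ E, μ {ω | δ ≤ |τhat e ω - τ e|} ≤ ENNReal.ofReal (2 *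
      exp (-(2 * (n / 2 : ℕ) / (9 * π ^ 2)) * C₁ ^ 2 * (n : ℝ) ^ (-(2 * κ)))) := fun e _ ↦ by
    rw [← h_exponent]
    convert measure_le_abs_uStatistic_sub_le hn hXmeas hXindep hXident
      (measurable_kendallKernel e.1 e.2) (kendallKernel_comm e.1 e.2)
      (fun _ _ ↦ Real.sign_mem_Icc _) (t := δ) (by positivity) using 6
    simp [hτhat, hτ, uStatistic, kendallKernel]
  have h_good : (⋃ e ∈ E, {ω | δ ≤ |τhat e ω - τ e|})ᶜ ⊆ {ω | (E : Set (Fin p × Fin p)) ⊆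
      {e | e.1 < e.2 ∧ (2 / 3) * C₁ * (n : ℝ) ^ (-κ) < |sin (π / 2 * τhat e ω)|}} := by
    intro ω hω e he
    have h_close : |τhat e ω - τ e| < δ := not_le.1 fun h ↦ hω (Set.mem_biUnion he h)
    refine ⟨hE e he, lt_of_le_of_lt ?_ (lt_abs_sin_of_abs_sub_lt h_close)⟩
    have hδ : π / 2 * δ = C₁ * (n : ℝ) ^ (-κ) / 3 := by rw [hδ_def]; field_simp
    linarith [hρ e ▸ hmin e he]
  have h_card : (E.card : ℝ≥0∞) ≤ p ^ 2 := by
    exact_mod_cast E.card_le_univ.trans (by simp [sq])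
  refine le_trans (tsub_le_tsub_left ?_ 1) (one_sub_card_mul_le_measure h_tail h_good)
  set bound := exp (-(2 * (n / 2 : ℕ) / (9 * π ^ 2)) * C₁ ^ 2 * (n : ℝ) ^ (-(2 * κ)))
  calc (E.card : ℝ≥0∞) * ENNReal.ofReal (2 * bound) ≤ p ^ 2 * ENNReal.ofReal (2 * bound) := by
        gcongr
    _ = ENNReal.ofReal (2 * p ^ 2 * bound) := by
        rw [← ENNReal.ofReal_natCast, ← ENNReal.ofReal_pow (by positivity),
          ← ENNReal.ofReal_mul (by positivity)]
        ring_nf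
end
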